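/- arXiv:2112.13521 — 4 statements merged into one kernel-verified Lean document; each statement's English description precedes it below -/
import Mathlib

section
/- Let {φ_j} be a sequence of vectors in ℝ^d, Λ_0 a positive-definite d×d matrix, and Λ_t = Λ_0 + Σ_{j=1}^{t-1} φ_j φ_j^⊤. Then for any positive integer t, Σ_{j=1}^t min{1, ‖φ_j‖²_{Λ_j^{-1}}} ≤ 2 log(det(Λ_{t+1}) / det(Λ_1)), where ‖x‖²_A = x^⊤ A x. -/
open Matrix Finset

/-!
By the matrix determinant lemma, `det Λ_{j+1} = det Λ_j * (1 + ‖φ_j‖²_{Λ_j⁻¹})`, so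
`log (det Λ_{t+1} / det Λ_1)` telescopes into `∑ j, log (1 + ‖φ_j‖²_{Λ_j⁻¹})`, and termwise
`min 1 x ≤ 2 log (1 + x)` for `x ≥ 0`.
-/

theorem Real.min_one_le_two_mul_log_one_add {x : ℝ} (hx : 0 ≤ x) :
    min 1 x ≤ 2 * Real.log (1 + x) := by
  have hpos : 0 < 1 + x := by linarith
  have hlog : x / (1 + x) ≤ Real.log (1 + x) := by
    have hfrac : 1 - (1 + x)⁻¹ = x / (1 + x) := by field_simp; ring
    exact hfrac ▸ Real.one_sub_inv_le_log_of_pos hpos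
  have hmin : min 1 x * (1 + x) ≤ 2 * x := by
    rcases le_total x 1 with h | h
    · nlinarith [min_le_right 1 x]
    · nlinarith [min_le_left 1 x]
  calc min 1 x ≤ 2 * (x / (1 + x)) := by rw [mul_div_assoc', le_div_iff₀ hpos]; exact hmin
    _ ≤ 2 * Real.log (1 + x) := by gcongr

theorem Matrix.det_add_vecMulVec {m α : Type*} [Fintype m] [DecidableEq m] [CommRing α]
    {A : Matrix m m α} (hA : IsUnit A.det) (u v : m → α) :
    (A + vecMulVec u v).det = A.det * (1 + v ⬝ᵥ A⁻¹ *ᵥ u) := by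
  rw [vecMulVec_eq Unit, det_add_replicateCol_mul_replicateRow hA, det_unique (n := Unit),
    ← replicateRow_vecMul, add_apply, one_apply_eq, replicateRow_mul_replicateCol_apply,
    dotProduct_mulVec]

theorem Matrix.PosDef.min_one_le_two_mul_log_det_add_vecMulVec {n : Type*} [Fintype n]
    [DecidableEq n] {A : Matrix n n ℝ} (hA : A.PosDef) (u : n → ℝ) :
    min 1 (u ⬝ᵥ A⁻¹ *ᵥ u) ≤ 2 * Real.log ((A + vecMulVec u u).det / A.det) := by
  have hq : 0 ≤ u ⬝ᵥ A⁻¹ *ᵥ u := by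
    simpa using hA.inv.posSemidef.dotProduct_mulVec_nonneg u
  rw [det_add_vecMulVec hA.det_pos.ne'.isUnit, mul_div_cancel_left₀ _ hA.det_pos.ne']
  exact Real.min_one_le_two_mul_log_one_add hq

/-- Elliptical potential lemma. -/
theorem elliptical_potential {d : ℕ} (φ : ℕ → Fin d → ℝ)
    (Λ0 : Matrix (Fin d) (Fin d) ℝ) (hΛ0 : Λ0.PosDef)
    (Λ : ℕ → Matrix (Fin d) (Fin d) ℝ)
    (hΛ : ∀ t, Λ t = Λ0 + ∑ j ∈ Finset.Ico 1 t, vecMulVec (φ j) (φ j))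
    (t : ℕ) (ht : 1 ≤ t) :
    ∑ j ∈ Finset.Icc 1 t, min 1 ((φ j) ⬝ᵥ (Λ j)⁻¹.mulVec (φ j)) ≤
      2 * Real.log ((Λ (t + 1)).det / (Λ 1).det) := by
  have hPD (j : ℕ) : (Λ j).PosDef := by
    rw [hΛ]
    exact hΛ0.add_posSemidef <| posSemidef_sum _ fun i _ => by
      simpa using posSemidef_vecMulVec_self_star (φ i)
  have hstep (j : ℕ) (hj : 1 ≤ j) : Λ (j + 1) = Λ j + vecMulVec (φ j) (φ j) := by
    rw [hΛ, hΛ, sum_Ico_succ_top hj, add_assoc]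
  have hlogdet (i j : ℕ) : Real.log ((Λ i).det / (Λ j).det) =
      Real.log (Λ i).det - Real.log (Λ j).det :=
    Real.log_div (hPD _).det_pos.ne' (hPD _).det_pos.ne'
  calc ∑ j ∈ Icc 1 t, min 1 (φ j ⬝ᵥ (Λ j)⁻¹ *ᵥ φ j)
      ≤ ∑ j ∈ Icc 1 t, 2 * Real.log ((Λ (j + 1)).det / (Λ j).det) := by
        refine sum_le_sum fun j hj => ?_
        rw [hstep j (mem_Icc.mp hj).1]
        exact (hPD j).min_one_le_two_mul_log_det_add_vecMulVec (φ j)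
    _ = 2 * Real.log ((Λ (t + 1)).det / (Λ 1).det) := by
        rw [← mul_sum, hlogdet, sum_congr rfl fun j _ => hlogdet (j + 1) j,
          sum_Icc_sub (f := fun j => Real.log (Λ j).det) ht]
end

section
/- Let φ_1,…,φ_{k-1} ∈ ℝ^d with ‖φ_τ‖_2 ≤ 1, Λ = I + Σ_{τ=1}^{k-1} φ_τ φ_τ^⊤, and let v_1,…,v_{k-1} ∈ ℝ with |v_τ| ≤ H for all τ. Then the vector w = Λ^{-1} Σ_{τ=1}^{k-1} φ_τ v_τ satisfies ‖w‖_2 ≤ H√(kd). -/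
/-!
With `Φ` the matrix whose rows are the `φ τ`, `w` solves the normal equations
`(1 + Φᵀ Φ) w = Φᵀ v`. Dotting them with `w` gives `‖w‖² + ‖Φ w‖² = ⟨Φ w, v⟩ ≤ ‖Φ w‖² + ‖v‖² / 4`,
hence `‖w‖ ≤ ‖v‖ / 2 ≤ H √(k - 1) / 2`.
-/

open Matrix Finset

namespace Matrix

theorem transpose_mul_self_eq_sum_vecMulVec {m n R : Type*} [Fintype m] [CommSemiring R]
    (Φ : Matrix m n R) : Φᵀ * Φ = ∑ i, vecMulVec (Φ i) (Φ i) := by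
  ext j l
  simp only [mul_apply, transpose_apply, sum_apply, vecMulVec_apply]

theorem four_mul_dotProduct_le {n : Type*} [Fintype n] (a b : n → ℝ) :
    4 * (a ⬝ᵥ b) ≤ 4 * (a ⬝ᵥ a) + b ⬝ᵥ b := by
  simp only [dotProduct, mul_sum, ← sum_add_distrib]
  gcongr with i
  nlinarith [sq_nonneg (2 * a i - b i)]

theorem dotProduct_self_le_card_mul_sq {m : Type*} [Fintype m] {v : m → ℝ} {H : ℝ}
    (hv : ∀ i, |v i| ≤ H) : v ⬝ᵥ v ≤ Fintype.card m * H ^ 2 :=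
  calc v ⬝ᵥ v = ∑ i, |v i| ^ 2 := by simp only [dotProduct, sq_abs, ← sq]
    _ ≤ ∑ _i : m, H ^ 2 := by gcongr with i; exact hv i
    _ = Fintype.card m * H ^ 2 := by simp

section Ridge

variable {m n : Type*} [Fintype m] [Fintype n] [DecidableEq n]

theorem isUnit_one_add_transpose_mul_self (Φ : Matrix m n ℝ) : IsUnit (1 + Φᵀ * Φ) :=
  (PosDef.one.add_posSemidef (posSemidef_conjTranspose_mul_self Φ)).isUnit

theorem four_mul_dotProduct_self_le_of_ridge_eq (Φ : Matrix m n ℝ) (v : m → ℝ) {w : n → ℝ}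
    (hw : (1 + Φᵀ * Φ) *ᵥ w = v ᵥ* Φ) : 4 * (w ⬝ᵥ w) ≤ v ⬝ᵥ v := by
  have energy : w ⬝ᵥ w + (Φ *ᵥ w) ⬝ᵥ (Φ *ᵥ w) = (Φ *ᵥ w) ⬝ᵥ v :=
    calc w ⬝ᵥ w + (Φ *ᵥ w) ⬝ᵥ (Φ *ᵥ w) = w ⬝ᵥ ((1 + Φᵀ * Φ) *ᵥ w) := by
          rw [add_mulVec, one_mulVec, dotProduct_add, ← mulVec_mulVec, dotProduct_mulVec w,
            vecMul_transpose]
      _ = (Φ *ᵥ w) ⬝ᵥ v := by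
          rw [hw, dotProduct_comm, ← dotProduct_mulVec, dotProduct_comm]
  linarith [four_mul_dotProduct_le (Φ *ᵥ w) v]

end Ridge

end Matrix

theorem ridge_weight_bound_general {d k : ℕ} (H : ℝ) (hH : 0 ≤ H)
    (φ : Fin (k - 1) → Fin d → ℝ)
    (v : Fin (k - 1) → ℝ) (hv : ∀ τ, |v τ| ≤ H)
    (Λ : Matrix (Fin d) (Fin d) ℝ)
    (hΛ : Λ = 1 + ∑ τ, vecMulVec (φ τ) (φ τ))
    (w : Fin d → ℝ) (hw : w = Λ⁻¹.mulVec (∑ τ, v τ • φ τ)) :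
    Real.sqrt (w ⬝ᵥ w) ≤ H * Real.sqrt (k * d) := by
  let Φ : Matrix (Fin (k - 1)) (Fin d) ℝ := Matrix.of φ
  have hΛΦ : Λ = 1 + Φᵀ * Φ := by rw [hΛ, transpose_mul_self_eq_sum_vecMulVec]; rfl
  have normal : (1 + Φᵀ * Φ) *ᵥ w = v ᵥ* Φ := by
    rw [hw, hΛΦ, mulVec_mulVec,
      mul_nonsing_inv _ ((isUnit_iff_isUnit_det _).1 (isUnit_one_add_transpose_mul_self Φ)),
      one_mulVec, vecMul_eq_sum]
    rfl
  have hwv := four_mul_dotProduct_self_le_of_ridge_eq Φ v normal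
  have hvH := dotProduct_self_le_card_mul_sq hv
  rw [Fintype.card_fin] at hvH
  rcases d.eq_zero_or_pos with rfl | hd
  · simp [dotProduct]
  · have hk : ((k - 1 : ℕ) : ℝ) ≤ k * d := by
      have : ((k - 1 : ℕ) : ℝ) ≤ k := by exact_mod_cast k.sub_le 1
      have : (1 : ℝ) ≤ d := by exact_mod_cast hd
      nlinarith
    rw [Real.sqrt_le_left (by positivity), mul_pow, Real.sq_sqrt (by positivity)]
    nlinarith

/-- Bounded weight of the ridge-regression solution. -/
theorem ridge_weight_bound {d k : ℕ} (H : ℝ) (hH : 0 ≤ H)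
    (φ : Fin (k - 1) → Fin d → ℝ) (hφ : ∀ τ, Real.sqrt (φ τ ⬝ᵥ φ τ) ≤ 1)
    (v : Fin (k - 1) → ℝ) (hv : ∀ τ, |v τ| ≤ H)
    (Λ : Matrix (Fin d) (Fin d) ℝ)
    (hΛ : Λ = 1 + ∑ τ, vecMulVec (φ τ) (φ τ))
    (w : Fin d → ℝ) (hw : w = Λ⁻¹.mulVec (∑ τ, v τ • φ τ)) :
    Real.sqrt (w ⬝ᵥ w) ≤ H * Real.sqrt (k * d) :=
  ridge_weight_bound_general H hH φ v hv Λ hΛ w hw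
end

section
/- With the setup of the value-difference decomposition, if additionally for all (h,x,a) the prediction error satisfies δ_h(x,a) ≤ 0, and Q̂ is constructed so that the executed policy π̂ satisfies ⟨Q̂_h(x,·), π^*_h(·|x) − π̂_h(·|x)⟩ ≤ ε for all h, x (ε-greediness), then V^{π^*}_1(x) − V̂_1(x) ≤ εH for every initial state x, where π^* is any comparator policy. -/
open Finset

/-- Expected sum of `f(h, x_h, a_h)` along `n` remaining steps of the trajectory
generated by policy `π` in the MDP with transitions `P`, starting at step `h`
in state `x`. -/
noncomputable def trajSum {S A : Type*} [Fintype S] [Fintype A]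
    (P : ℕ → S → A → S → ℝ) (π : ℕ → S → A → ℝ) (f : ℕ → S → A → ℝ) :
    ℕ → ℕ → S → ℝ
  | 0, _, _ => 0
  | n + 1, h, x =>
      ∑ a, π h x a * (f h x a + ∑ x', P h x a x' * trajSum P π f n (h + 1) x')

/-- Optimism plus `ε`-greediness: if the prediction error is nonpositive and the
executed policy is `ε`-greedy w.r.t. `Q̂`, then `V^{π*}_1(x) − V̂_1(x) ≤ εH`. -/
theorem optimism_implies_upper_bound {S A : Type*} [Fintype S] [Fintype A]
    (H : ℕ) (hHpos : 1 ≤ H) (ε : ℝ)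
    (P : ℕ → S → A → S → ℝ)
    (hP : ∀ h x a, (∀ x', 0 ≤ P h x a x') ∧ ∑ x', P h x a x' = 1)
    (r : ℕ → S → A → ℝ) (hr : ∀ h x a, r h x a ∈ Set.Icc (-1 : ℝ) 1)
    (πstar πhat : ℕ → S → A → ℝ)
    (hπ : ∀ h x, (∀ a, 0 ≤ πstar h x a) ∧ ∑ a, πstar h x a = 1)
    (hπhat : ∀ h x, (∀ a, 0 ≤ πhat h x a) ∧ ∑ a, πhat h x a = 1)
    (Qhat : ℕ → S → A → ℝ) (hQtop : ∀ x a, Qhat (H + 1) x a = 0)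
    (Vhat : ℕ → S → ℝ) (hVhat : ∀ h x, Vhat h x = ∑ a, πhat h x a * Qhat h x a)
    (δ : ℕ → S → A → ℝ)
    (hδ : ∀ h x a,
      δ h x a = r h x a + (∑ x', P h x a x' * Vhat (h + 1) x') - Qhat h x a)
    (hopt : ∀ h x a, 1 ≤ h → h ≤ H → δ h x a ≤ 0)
    (hgreedy : ∀ h x, 1 ≤ h → h ≤ H →
      ∑ a, (πstar h x a - πhat h x a) * Qhat h x a ≤ ε)
    (x : S) :
    trajSum P πstar r H 1 x - Vhat 1 x ≤ ε * H := by
  have key : ∀ n h, h + n = H + 1 → 1 ≤ h → ∀ x,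
      trajSum P πstar r n h x - Vhat h x ≤ ε * n := by
    intro n
    induction n with
    | zero =>
      intro h hh _ x
      have hH : h = H + 1 := by omega
      subst hH
      simp [trajSum, hVhat, hQtop]
    | succ n ih =>
      intro h hh hh1 x
      have hhH : h ≤ H := by omega
      have hIH : ∀ x', trajSum P πstar r n (h+1) x' - Vhat (h+1) x' ≤ ε * n :=
        fun x' => ih (h+1) (by omega) (by omega) x'
      have hstep : ∀ a, r h x a + ∑ x', P h x a x' * trajSum P πstar r n (h+1) x'
          ≤ Qhat h x a + ε * n := by
        intro a
        have hδ' := hopt h x a hh1 hhH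
        rw [hδ h x a] at hδ'
        have hsum : ∑ x', P h x a x' * trajSum P πstar r n (h+1) x'
            ≤ ∑ x', P h x a x' * (Vhat (h+1) x' + ε * n) := by
          apply Finset.sum_le_sum
          intro x' _
          exact mul_le_mul_of_nonneg_left (by linarith [hIH x']) ((hP h x a).1 x')
        have hsplit : ∑ x', P h x a x' * (Vhat (h+1) x' + ε * n)
            = (∑ x', P h x a x' * Vhat (h+1) x') + ε * n := by
          simp only [mul_add, Finset.sum_add_distrib, ← Finset.sum_mul, (hP h x a).2, one_mul]
        linarith
      have h1 : trajSum P πstar r (n+1) h x ≤ ∑ a, πstar h x a * (Qhat h x a + ε * n) := by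
        rw [trajSum]
        apply Finset.sum_le_sum
        intro a _
        exact mul_le_mul_of_nonneg_left (hstep a) ((hπ h x).1 a)
      have h2 : ∑ a, πstar h x a * (Qhat h x a + ε * n)
          = (∑ a, (πstar h x a - πhat h x a) * Qhat h x a) + Vhat h x + ε * n := by
        rw [hVhat]
        simp only [mul_add, sub_mul, Finset.sum_add_distrib, Finset.sum_sub_distrib,
          ← Finset.sum_mul, (hπ h x).2, one_mul]
        ring
      have h3 := hgreedy h x hh1 hhH
      have : (↑(n+1) : ℝ) = ↑n + 1 := by push_cast; ring
      rw [this]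
      nlinarith [h1, h2, h3]
  have := key H 1 (by omega) le_rfl x
  simpa using this
end

section
/- In a finite-horizon MDP with horizon H and rewards in [−1,1], let π̂ be a policy and Q̂_h functions with Q̂_{H+1}=0, V̂_h(x) = ⟨Q̂_h(x,·), π̂_h(·|x)⟩, and δ_h = r_h + P_h V̂_{h+1} − Q̂_h. If δ_h(x,a) ≥ 0 for all (h,x,a), then for every initial state x, V̂_1(x) ≤ V^{π̂}_1(x); more precisely V̂_1(x) − V^{π̂}_1(x) = −E_{π̂}[Σ_{h=1}^H δ_h(x_h,a_h)] ≤ 0. -/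
open Finset

/-- Pessimism: if the prediction error is nonnegative, the estimated value
lower-bounds the true value of the executed policy, with the exact identity
`V̂_1(x) − V^{π̂}_1(x) = −E_{π̂}[Σ_h δ_h(x_h, a_h)] ≤ 0`. -/
theorem pessimism_lower_bound {S A : Type*} [Fintype S] [Fintype A]
    (H : ℕ) (hHpos : 1 ≤ H)
    (P : ℕ → S → A → S → ℝ)
    (hP : ∀ h x a, (∀ x', 0 ≤ P h x a x') ∧ ∑ x', P h x a x' = 1)
    (r : ℕ → S → A → ℝ) (hr : ∀ h x a, r h x a ∈ Set.Icc (-1 : ℝ) 1)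
    (πhat : ℕ → S → A → ℝ)
    (hπhat : ∀ h x, (∀ a, 0 ≤ πhat h x a) ∧ ∑ a, πhat h x a = 1)
    (Qhat : ℕ → S → A → ℝ) (hQtop : ∀ x a, Qhat (H + 1) x a = 0)
    (Vhat : ℕ → S → ℝ) (hVhat : ∀ h x, Vhat h x = ∑ a, πhat h x a * Qhat h x a)
    (δ : ℕ → S → A → ℝ)
    (hδ : ∀ h x a,
      δ h x a = r h x a + (∑ x', P h x a x' * Vhat (h + 1) x') - Qhat h x a)
    (hpess : ∀ h x a, 1 ≤ h → h ≤ H → 0 ≤ δ h x a)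
    (x : S) :
    Vhat 1 x - trajSum P πhat r H 1 x = -trajSum P πhat δ H 1 x ∧
      Vhat 1 x ≤ trajSum P πhat r H 1 x := by

  have key : ∀ n h, h + n = H + 1 → ∀ x, Vhat h x - trajSum P πhat r n h x
      = - trajSum P πhat δ n h x := by
    intro n
    induction n with
    | zero =>
      intro h hh x
      have hh' : h = H + 1 := by omega
      simp [trajSum, hVhat, hh', hQtop]
    | succ n ih =>
      intro h hh x
      have hh' : (h + 1) + n = H + 1 := by omega
      simp only [trajSum]
      rw [hVhat, ← Finset.sum_sub_distrib, ← Finset.sum_neg_distrib]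
      apply Finset.sum_congr rfl
      intro a _
      rw [← mul_sub, ← mul_neg]
      congr 1
      have hsum : ∑ x', P h x a x' * Vhat (h + 1) x'
          - ∑ x', P h x a x' * trajSum P πhat r n (h + 1) x'
          = - ∑ x', P h x a x' * trajSum P πhat δ n (h + 1) x' := by
        rw [← Finset.sum_neg_distrib, ← Finset.sum_sub_distrib]
        apply Finset.sum_congr rfl
        intro x' _
        rw [← mul_sub, ih (h + 1) hh' x', mul_neg]
      have hQ : Qhat h x a = r h x a + (∑ x', P h x a x' * Vhat (h + 1) x') - δ h x a := by
        rw [hδ]; ring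
      rw [hQ]
      linarith [hsum]
  have nonneg : ∀ n h, 1 ≤ h → h + n ≤ H + 1 → ∀ x, 0 ≤ trajSum P πhat δ n h x := by
    intro n
    induction n with
    | zero => intro h _ _ x; simp [trajSum]
    | succ n ih =>
      intro h h1 hle x
      simp only [trajSum]
      apply Finset.sum_nonneg
      intro a _
      refine mul_nonneg ((hπhat h x).1 a) (add_nonneg (hpess h x a h1 (by omega)) ?_)
      exact Finset.sum_nonneg fun x' _ =>
        mul_nonneg ((hP h x a).1 x') (ih (h + 1) (by omega) (by omega) x')
  have e := key H 1 (by omega) x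
  have nn := nonneg H 1 le_rfl (by omega) x
  exact ⟨e, by linarith⟩
end
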